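/- Let X be a Hilbert space and Γ : X → X a symmetric bounded linear operator with ⟨x, Γx⟩ ≥ 0 for all x. Then Γ is strictly positive (⟨x, Γx⟩ > 0 for all nonzero x) if and only if for every η ∈ X, ε(εI + Γ)^{-1} η → 0 strongly as ε → 0⁺. -/
import Mathlib


open scoped RealInnerProductSpace
open Filter

/-- Let `X` be a Hilbert space and `Γ` a symmetric bounded positive-semidefinite
operator, and for each `ε > 0` let `R ε = (ε I + Γ)⁻¹` (a two-sided bounded inverse).
Then `Γ` is strictly positive (`⟪x, Γ x⟫ > 0` for all `x ≠ 0`) if and only if for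
every `η ∈ X`, `ε (ε I + Γ)⁻¹ η → 0` strongly as `ε → 0⁺`. -/
theorem strict_positivity_iff_resolvent_tendsto_zero
    {X : Type*} [NormedAddCommGroup X] [InnerProductSpace ℝ X] [CompleteSpace X]
    (T : X →L[ℝ] X) (hsymm : ∀ x y : X, ⟪T x, y⟫ = ⟪x, T y⟫)
    (hpos : ∀ x : X, 0 ≤ ⟪x, T x⟫)
    (R : ℝ → X →L[ℝ] X)
    (hR : ∀ ε > (0:ℝ), (∀ η : X, ε • R ε η + T (R ε η) = η) ∧
      (∀ x : X, R ε (ε • x + T x) = x)) :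
    (∀ x : X, x ≠ 0 → 0 < ⟪x, T x⟫) ↔
      (∀ η : X, Tendsto (fun ε : ℝ => ε • R ε η)
        (nhdsWithin 0 (Set.Ioi 0)) (nhds 0)) := by
  have hbound : ∀ ε > (0:ℝ), ∀ ζ : X, ‖ε • R ε ζ‖ ≤ ‖ζ‖ := by
    intro ε hε ζ
    set y := R ε ζ with hy
    have heq : ε • y + T y = ζ := (hR ε hε).1 ζ
    have h2 : ⟪y, ε • y⟫ + ⟪y, T y⟫ = ⟪y, ζ⟫ := by
      rw [← inner_add_right, heq]
    have h3 : ⟪y, ε • y⟫ = ε * ‖y‖^2 := by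
      rw [real_inner_smul_right, real_inner_self_eq_norm_sq]
    have h4 := real_inner_le_norm y ζ
    have h5 := hpos y
    have h1 : ε * ‖y‖^2 ≤ ‖y‖ * ‖ζ‖ := by nlinarith
    rw [norm_smul, Real.norm_eq_abs, abs_of_pos hε]
    rcases eq_or_ne y 0 with h | h
    · simp [h]
    · have hny : 0 < ‖y‖ := norm_pos_iff.mpr h
      nlinarith
  constructor
  · intro hstrict η
    have hdense : ∀ δ > (0:ℝ), ∃ ξ : X, ‖η - T ξ‖ < δ := by
      intro δ hδ
      have hK : (LinearMap.range (T : X →ₗ[ℝ] X))ᗮ = ⊥ := by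
        rw [Submodule.eq_bot_iff]
        intro v hv
        by_contra hv0
        have h1 : ⟪T v, v⟫ = 0 := hv (T v) ⟨v, rfl⟩
        have h2 := hstrict v hv0
        rw [real_inner_comm] at h1
        linarith
      have hcl : (LinearMap.range (T : X →ₗ[ℝ] X)).topologicalClosure = ⊤ := by
        rw [← Submodule.orthogonal_orthogonal_eq_closure, hK,
          Submodule.bot_orthogonal_eq_top]
      have hmem : η ∈ closure ((LinearMap.range (T : X →ₗ[ℝ] X)) : Set X) := by
        have : η ∈ (LinearMap.range (T : X →ₗ[ℝ] X)).topologicalClosure :=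
          hcl ▸ Submodule.mem_top
        exact this
      rw [Metric.mem_closure_iff] at hmem
      obtain ⟨u, hu, hd⟩ := hmem δ hδ
      obtain ⟨ξ, rfl⟩ := hu
      exact ⟨ξ, by rwa [← dist_eq_norm]⟩
    rw [Metric.tendsto_nhdsWithin_nhds]
    intro δ hδ
    obtain ⟨ξ, hξ⟩ := hdense (δ / 2) (by linarith)
    refine ⟨δ / (4 * (‖ξ‖ + 1)), by positivity, ?_⟩
    intro ε hε hεd
    rw [Real.dist_eq, sub_zero, abs_of_pos hε] at hεd
    have hε0 : 0 < ε := hε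
    rw [dist_zero_right]
    have key : ε • R ε η = ε • R ε (η - T ξ) + ε • R ε (T ξ) := by
      rw [← smul_add, ← map_add, sub_add_cancel]
    have hTξ : R ε (T ξ) = ξ - ε • R ε ξ := by
      have h2 := (hR ε hε0).2 ξ
      rw [map_add, map_smul] at h2
      rw [eq_sub_iff_add_eq, add_comm]
      exact h2
    have hb1 : ‖ε • R ε (η - T ξ)‖ ≤ ‖η - T ξ‖ := hbound ε hε0 _
    have hb2 : ‖ε • R ε (T ξ)‖ ≤ 2 * ε * ‖ξ‖ := by
      rw [hTξ, smul_sub]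
      calc ‖ε • ξ - ε • (ε • R ε ξ)‖ ≤ ‖ε • ξ‖ + ‖ε • (ε • R ε ξ)‖ :=
            norm_sub_le _ _
        _ ≤ ε * ‖ξ‖ + ε * ‖ε • R ε ξ‖ := by
            rw [norm_smul, norm_smul, Real.norm_eq_abs, abs_of_pos hε0]
        _ ≤ ε * ‖ξ‖ + ε * ‖ξ‖ := by
            have := hbound ε hε0 ξ
            nlinarith
        _ = 2 * ε * ‖ξ‖ := by ring
    have hnorm : ‖ε • R ε η‖ ≤ ‖η - T ξ‖ + 2 * ε * ‖ξ‖ := by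
      rw [key]
      calc ‖ε • R ε (η - T ξ) + ε • R ε (T ξ)‖
          ≤ ‖ε • R ε (η - T ξ)‖ + ‖ε • R ε (T ξ)‖ := norm_add_le _ _
        _ ≤ ‖η - T ξ‖ + 2 * ε * ‖ξ‖ := add_le_add hb1 hb2
    have hξ1 : 0 < ‖ξ‖ + 1 := by positivity
    have h2εξ : 2 * ε * ‖ξ‖ < δ / 2 := by
      have h1 : 2 * ε * ‖ξ‖ ≤ 2 * ε * (‖ξ‖ + 1) := by nlinarith
      have h2 : 2 * ε * (‖ξ‖ + 1) < 2 * (δ / (4 * (‖ξ‖ + 1))) * (‖ξ‖ + 1) := by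
        nlinarith
      have h3 : 2 * (δ / (4 * (‖ξ‖ + 1))) * (‖ξ‖ + 1) = δ / 2 := by
        field_simp; ring
      linarith
    linarith
  · intro htend x hx
    rcases lt_or_eq_of_le (hpos x) with h | h
    · exact h
    exfalso
    have hb0 : ∀ y : X, ⟪y, T x⟫ = 0 := by
      intro y
      set b := ⟪y, T x⟫ with hbdef
      set c := ⟪y, T y⟫ with hcdef
      have hc : 0 ≤ c := hpos y
      have hq : ∀ t : ℝ, 0 ≤ c * t ^ 2 + (2 * b) * t + 0 := by
        intro t
        have h1 := hpos (x + t • y)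
        have hexp : ⟪x + t • y, T (x + t • y)⟫
            = ⟪x, T x⟫ + t * ⟪x, T y⟫ + t * ⟪y, T x⟫ + t ^ 2 * c := by
          rw [map_add, map_smul, inner_add_left, inner_add_right, inner_add_right,
            real_inner_smul_left, real_inner_smul_left, real_inner_smul_right,
            real_inner_smul_right, hcdef]
          ring
        have hsym2 : ⟪x, T y⟫ = ⟪y, T x⟫ := by
          rw [← hsymm x y, real_inner_comm]
        rw [hexp, hsym2, ← h, ← hbdef] at h1
        nlinarith [h1]
      by_contra hb
      have hb2 : 0 < b ^ 2 := by positivity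
      have hc1 : 0 < c + 1 := by linarith
      set t := -b / (c + 1) with htdef
      have hmul : t * (c + 1) = -b := by rw [htdef]; field_simp
      have ht := hq t
      have key : c * t ^ 2 * (c + 1) ^ 2 + 2 * b * t * (c + 1) ^ 2
          = -(b ^ 2) * (c + 2) := by
        linear_combination (c * (t * (c + 1)) + b * (c + 2)) * hmul
      have ht2 : 0 ≤ (c * t ^ 2 + 2 * b * t) * (c + 1) ^ 2 :=
        mul_nonneg (by nlinarith [ht]) (sq_nonneg _)
      nlinarith [ht2, key, hb2, hc]
    have hTx : T x = 0 := by
      have := hb0 (T x)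
      rwa [real_inner_self_eq_norm_sq, pow_eq_zero_iff (two_ne_zero),
        norm_eq_zero] at this
    have hconst : ∀ ε > (0:ℝ), ε • R ε x = x := by
      intro ε hε
      have h2 := (hR ε hε).2 x
      rwa [hTx, add_zero, map_smul] at h2
    have h2 : Tendsto (fun _ : ℝ => x) (nhdsWithin 0 (Set.Ioi 0)) (nhds 0) := by
      apply (htend x).congr'
      filter_upwards [self_mem_nhdsWithin] with ε hε
      exact hconst ε hε
    exact hx (tendsto_nhds_unique tendsto_const_nhds h2)
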